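/- arXiv:1305.2173 — 4 statements merged into one kernel-verified Lean document; each statement's English description precedes it below -/
import Mathlib

section
/- In a one-dimensional convex cellular network, if a set of messages admits an alternating demand-graph cycle (D_{i1} ↛ S_{i2} → D_{i3} ↛ ... → D_{i1}) among its sources and destinations, then there exists an alternating subpath D_{j1} ↛ S_{j2} → D_{j3} ↛ S_{j4} → D_{j5} within the cycle satisfying D_{j1} < D_{j3}, D_{j5} < D_{j3}, S_{j4} < D_{j3}, and D_{j1} < S_{j2} in position order. -/
/-- A one-dimensional convex cellular network: sources and destinations are
placed at (distinct) positions on the real line; `desired s d` means source `s`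
has a desired message for destination `d`; `heard s d` means `d` can hear `s`
(nonzero channel).  The fields are the destination- and source-convexity
properties of the paper, plus non-degeneracy (desired implies heard). -/
structure IsConvexCellular {Src Dst : Type*} (posS : Src → ℝ) (posD : Dst → ℝ)
    (desired heard : Src → Dst → Prop) : Prop where
  posS_inj : Function.Injective posS
  posD_inj : Function.Injective posD
  pos_ne : ∀ s d, posS s ≠ posD d
  desired_heard : ∀ s d, desired s d → heard s d
  /-- Destination convexity (a): a desired source on the left forces all closer
  sources on the left to be desired. -/
  destConvL : ∀ s1 s2 d, posS s1 < posS s2 → posS s2 < posD d → desired s1 d → desired s2 d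
  /-- Destination convexity (b): right side. -/
  destConvR : ∀ s1 s2 d, posS s2 < posS s1 → posD d < posS s2 → desired s1 d → desired s2 d
  /-- Destination convexity (c): an unheard source on the left forces all farther
  sources on the left to be unheard. -/
  destHearL : ∀ s1 s2 d, posS s1 < posS s2 → posS s2 < posD d → ¬ heard s2 d → ¬ heard s1 d
  /-- Destination convexity (d): right side. -/
  destHearR : ∀ s1 s2 d, posS s2 < posS s1 → posD d < posS s2 → ¬ heard s2 d → ¬ heard s1 d
  /-- Source convexity (a). -/
  srcConvL : ∀ d1 d2 s, posD d1 < posD d2 → posD d2 < posS s → desired s d1 → desired s d2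
  /-- Source convexity (b). -/
  srcConvR : ∀ d1 d2 s, posD d2 < posD d1 → posS s < posD d2 → desired s d1 → desired s d2
  /-- Source convexity (c). -/
  srcHearL : ∀ d1 d2 s, posD d1 < posD d2 → posD d2 < posS s → ¬ heard s d2 → ¬ heard s d1
  /-- Source convexity (d). -/
  srcHearR : ∀ d1 d2 s, posD d2 < posD d1 → posS s < posD d2 → ¬ heard s d2 → ¬ heard s d1

/-!
Take `D_{j3}` to be the rightmost destination of the cycle, `S_{j2}` the source before it and
`S_{j4}` the source after it. Its neighbours `D_{j1}`, `D_{j5}` on the cycle lie strictly to its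
left, since each of them differs from `D_{j3}` in whether it hears the adjacent source. The
destinations that hear a source form an interval around it; since `S_{j2}` is heard at `D_{j3}`
but not at `D_{j1} < D_{j3}`, it lies to the right of `D_{j1}`, and symmetrically `S_{j4}` lies
to the left of `D_{j3}`.
-/
namespace IsConvexCellular

variable {Src Dst : Type*} {posS : Src → ℝ} {posD : Dst → ℝ} {desired heard : Src → Dst → Prop}
  {s : Src} {d₁ d₂ : Dst}

theorem posD_ne_of_not_heard_of_heard (h : IsConvexCellular posS posD desired heard)
    (h₁ : ¬ heard s d₁) (h₂ : heard s d₂) : posD d₁ ≠ posD d₂ :=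
  fun he => h₁ (h.posD_inj he ▸ h₂)

theorem lt_posS_of_not_heard_of_heard (h : IsConvexCellular posS posD desired heard)
    (h₁ : ¬ heard s d₁) (h₂ : heard s d₂) (hlt : posD d₁ < posD d₂) : posD d₁ < posS s :=
  (not_lt.mp fun hs => h.srcHearR d₂ d₁ s hlt hs h₁ h₂).lt_of_ne (h.pos_ne s d₁).symm

theorem posS_lt_of_not_heard_of_heard (h : IsConvexCellular posS posD desired heard)
    (h₁ : ¬ heard s d₁) (h₂ : heard s d₂) (hlt : posD d₂ < posD d₁) : posS s < posD d₁ :=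
  (not_lt.mp fun hs => h.srcHearL d₂ d₁ s hlt hs h₁ h₂).lt_of_ne (h.pos_ne s d₁)

end IsConvexCellular

theorem stmt5_general {Src Dst : Type*} (posS : Src → ℝ) (posD : Dst → ℝ)
    (desired heard : Src → Dst → Prop)
    (h : IsConvexCellular posS posD desired heard)
    (n : ℕ) (s : Fin (n + 1) → Src) (d : Fin (n + 1) → Dst)
    (hcyc : ∀ k, ¬ heard (s k) (d k) ∧ desired (s k) (d (k + 1))) :
    ∃ (dj1 dj3 dj5 : Dst) (sj2 sj4 : Src),
      (∃ k, d k = dj1) ∧ (∃ k, d k = dj3) ∧ (∃ k, d k = dj5) ∧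
      (∃ k, s k = sj2) ∧ (∃ k, s k = sj4) ∧
      ¬ heard sj2 dj1 ∧ desired sj2 dj3 ∧ ¬ heard sj4 dj3 ∧ desired sj4 dj5 ∧
      posD dj1 < posD dj3 ∧ posD dj5 < posD dj3 ∧
      posS sj4 < posD dj3 ∧ posD dj1 < posS sj2 := by
  obtain ⟨m, hm⟩ := Finite.exists_max fun k => posD (d k)
  obtain ⟨hunheard₁, hdesired₃⟩ := hcyc (m - 1)
  rw [sub_add_cancel] at hdesired₃
  obtain ⟨hunheard₃, hdesired₅⟩ := hcyc m
  have hheard₃ := h.desired_heard _ _ hdesired₃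
  have hheard₅ := h.desired_heard _ _ hdesired₅
  have hlt₁ : posD (d (m - 1)) < posD (d m) :=
    (hm _).lt_of_ne (h.posD_ne_of_not_heard_of_heard hunheard₁ hheard₃)
  have hlt₅ : posD (d (m + 1)) < posD (d m) :=
    (hm _).lt_of_ne (h.posD_ne_of_not_heard_of_heard hunheard₃ hheard₅).symm
  exact ⟨d (m - 1), d m, d (m + 1), s (m - 1), s m, ⟨_, rfl⟩, ⟨_, rfl⟩, ⟨_, rfl⟩, ⟨_, rfl⟩,
    ⟨_, rfl⟩, hunheard₁, hdesired₃, hunheard₃, hdesired₅, hlt₁, hlt₅,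
    h.posS_lt_of_not_heard_of_heard hunheard₃ hheard₅ hlt₅,
    h.lt_posS_of_not_heard_of_heard hunheard₁ hheard₃ hlt₁⟩

/-- If a set of messages (the relation `desired`) admits an alternating
demand-graph cycle `D₁ ↛ S₁ → D₂ ↛ S₂ → ⋯ → D₁` among its sources and
destinations, then within the cycle there is an alternating subpath
`Dⱼ₁ ↛ Sⱼ₂ → Dⱼ₃ ↛ Sⱼ₄ → Dⱼ₅` with `Dⱼ₁ < Dⱼ₃`, `Dⱼ₅ < Dⱼ₃`, `Sⱼ₄ < Dⱼ₃`
and `Dⱼ₁ < Sⱼ₂` in position order. -/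
theorem stmt5 {Src Dst : Type*} (posS : Src → ℝ) (posD : Dst → ℝ)
    (desired heard : Src → Dst → Prop)
    (h : IsConvexCellular posS posD desired heard)
    (n : ℕ) (s : Fin (n + 1) → Src) (d : Fin (n + 1) → Dst)
    (hs : Function.Injective s) (hd : Function.Injective d)
    (hcyc : ∀ k, ¬ heard (s k) (d k) ∧ desired (s k) (d (k + 1))) :
    ∃ (dj1 dj3 dj5 : Dst) (sj2 sj4 : Src),
      (∃ k, d k = dj1) ∧ (∃ k, d k = dj3) ∧ (∃ k, d k = dj5) ∧
      (∃ k, s k = sj2) ∧ (∃ k, s k = sj4) ∧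
      ¬ heard sj2 dj1 ∧ desired sj2 dj3 ∧ ¬ heard sj4 dj3 ∧ desired sj4 dj5 ∧
      posD dj1 < posD dj3 ∧ posD dj5 < posD dj3 ∧
      posS sj4 < posD dj3 ∧ posD dj1 < posS sj2 :=
  stmt5_general posS posD desired heard h n s d hcyc
end

section
/- In a one-dimensional convex cellular network where the left-to-right greedy orthogonal scheme, after choosing the message S1 → D1, would next choose S_i → D_j, the set of all messages that either originate from sources S1,...,S_{i-1} or are intended for destinations D1,...,D_{j-1} induces an acyclic demand graph (no alternating cycle of desired edges and non-hearing edges exists among the relevant sources and destinations). -/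
/-- The demand graph induced by the message set `W` has an alternating cycle:
a closed cyclic sequence of distinct sources and distinct destinations
alternating non-hearing edges with desired edges that are messages of `W`. -/
def HasAltCycleIn {Src Dst : Type*} (W heard : Src → Dst → Prop) : Prop :=
  ∃ (n : ℕ) (s : Fin (n + 1) → Src) (d : Fin (n + 1) → Dst),
    Function.Injective s ∧ Function.Injective d ∧
    ∀ k, ¬ heard (s k) (d k) ∧ W (s k) (d (k + 1))


/-! Any alternating cycle, read around the line, must make a "U-turn": some source `s k` lies to
the right of its unheard destination `d k` while the next source `s (k+1)` lies to the left of its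
unheard destination `d (k+1)`. Otherwise all sources lie on one side of their destinations, and the
extreme destination (resp. source) of the cycle contradicts convexity. By convexity the U-turn
message `s k → d (k+1)` is then orthogonal to `S1 → D1`, so greedy minimality places it after
`Si → Dj`; being in the message set forces it to cross `Si → Dj`, and then `Si → d (k+1)` is an
orthogonal message that precedes `Si → Dj`. -/

theorem Fin.forall_of_add_one_closed {n : ℕ} {P : Fin (n + 1) → Prop}
    (hstep : ∀ k, P k → P (k + 1)) {k₀ : Fin (n + 1)} (h₀ : P k₀) (k : Fin (n + 1)) : P k := by
  have hfrom : ∀ m, P (k₀ + m) := by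
    intro m
    induction m using Fin.induction with
    | zero => simpa using h₀
    | succ i ih => simpa [← Fin.coeSucc_eq_succ, ← add_assoc] using hstep _ ih
  simpa using hfrom (k - k₀)

namespace IsConvexCellular

variable {Src Dst : Type*} {posS : Src → ℝ} {posD : Dst → ℝ} {desired heard : Src → Dst → Prop}
  (h : IsConvexCellular posS posD desired heard)
include h

section Cycle

variable {n : ℕ} {s : Fin (n + 1) → Src} {d : Fin (n + 1) → Dst}
  (hcyc : ∀ k, ¬ heard (s k) (d k) ∧ heard (s k) (d (k + 1)))
include hcyc

theorem not_forall_src_lt_dst : ¬ ∀ k, posS (s k) < posD (d k) := by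
  intro hlt
  obtain ⟨k, hk⟩ := Finite.exists_min fun k => posD (d k)
  obtain ⟨hnot, hheard⟩ := hcyc k
  rcases (hk (k + 1)).lt_or_eq with hlt' | heq
  · exact h.srcHearR _ _ _ hlt' (hlt k) hnot hheard
  · exact hnot (h.posD_inj heq ▸ hheard)

theorem not_forall_dst_lt_src : ¬ ∀ k, posD (d k) < posS (s k) := by
  intro hlt
  obtain ⟨k, hk⟩ := Finite.exists_min fun k => posS (s k)
  have hheard : heard (s (k - 1)) (d k) := by simpa using (hcyc (k - 1)).2
  rcases (hk (k - 1)).lt_or_eq with hlt' | heq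
  · exact h.destHearR _ _ _ hlt' (hlt k) (hcyc k).1 hheard
  · exact (hcyc k).1 (h.posS_inj heq ▸ hheard)

theorem exists_uturn : ∃ k, posD (d k) < posS (s k) ∧ posS (s (k + 1)) < posD (d (k + 1)) := by
  by_contra! hno
  by_cases hall : ∀ k, posS (s k) < posD (d k)
  · exact h.not_forall_src_lt_dst hcyc hall
  obtain ⟨k₀, hk₀⟩ := not_forall.mp hall
  refine h.not_forall_dst_lt_src hcyc
    (Fin.forall_of_add_one_closed (fun k hk => ?_) ((not_lt.mp hk₀).lt_of_ne (h.pos_ne _ _).symm))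
  exact (hno k hk).lt_of_ne (h.pos_ne _ _).symm

end Cycle

theorem not_heard_leftmost_dst {S : Src} {D D₁ : Dst} (hD₁ : ∀ d, posD D₁ ≤ posD d)
    (hDS : posD D < posS S) (hn : ¬ heard S D) : ¬ heard S D₁ := by
  rcases (hD₁ D).lt_or_eq with hlt | heq
  · exact h.srcHearL _ _ _ hlt hDS hn
  · rwa [h.posD_inj heq]

theorem not_heard_leftmost_src {S S₁ : Src} {D : Dst} (hS₁ : ∀ s, posS S₁ ≤ posS s)
    (hSD : posS S < posD D) (hn : ¬ heard S D) : ¬ heard S₁ D := by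
  rcases (hS₁ S).lt_or_eq with hlt | heq
  · exact h.destHearL _ _ _ hlt hSD hn
  · rwa [h.posS_inj heq]

theorem exists_orthogonal_of_hasAltCycleIn {W : Src → Dst → Prop}
    (hW : ∀ S D, W S D → heard S D) {S₁ : Src} {D₁ : Dst}
    (hS₁ : ∀ s, posS S₁ ≤ posS s) (hD₁ : ∀ d, posD D₁ ≤ posD d) (hc : HasAltCycleIn W heard) :
    ∃ S D, W S D ∧ ¬ heard S D₁ ∧ ¬ heard S₁ D := by
  obtain ⟨n, s, d, -, -, hcyc⟩ := hc
  obtain ⟨k, hk, hk'⟩ := h.exists_uturn fun k => ⟨(hcyc k).1, hW _ _ (hcyc k).2⟩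
  exact ⟨s k, d (k + 1), (hcyc k).2, h.not_heard_leftmost_dst hD₁ hk (hcyc k).1,
    h.not_heard_leftmost_src hS₁ hk' (hcyc (k + 1)).1⟩

theorem desired_of_crossing {S S' : Src} {D D' : Dst} (hSD : desired S D) (hSD' : desired S' D')
    (hS : posS S < posS S') (hD : posD D' < posD D) : desired S D' := by
  rcases (h.pos_ne S D').lt_or_gt with hlt | hgt
  · exact h.srcConvR _ _ _ hD hlt hSD
  · exact h.destConvR _ _ _ hS hgt hSD'

end IsConvexCellular

theorem stmt7_general {Src Dst : Type*} (posS : Src → ℝ) (posD : Dst → ℝ)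
    (desired heard : Src → Dst → Prop)
    (h : IsConvexCellular posS posD desired heard)
    (S1 : Src) (D1 : Dst)
    (hS1 : ∀ s, posS S1 ≤ posS s) (hD1 : ∀ d, posD D1 ≤ posD d)
    (Si : Src) (Dj : Dst)
    (hij : desired Si Dj) (horthS : ¬ heard Si D1)
    (hmin : ∀ S D, desired S D → ¬ heard S D1 → ¬ heard S1 D →
      posS Si < posS S ∨ (posS Si = posS S ∧ posD Dj ≤ posD D)) :
    ¬ HasAltCycleIn
      (fun S D => desired S D ∧ (posS S < posS Si ∨ posD D < posD Dj)) heard := by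
  intro hc
  obtain ⟨S, D, ⟨hdes, hW⟩, hSD1, hS1D⟩ :=
    h.exists_orthogonal_of_hasAltCycleIn (fun S D hSD => h.desired_heard S D hSD.1) hS1 hD1 hc
  rcases hmin S D hdes hSD1 hS1D with hlt | ⟨heq, hle⟩
  · have hD : posD D < posD Dj := hW.resolve_left hlt.not_gt
    rcases hmin Si D (h.desired_of_crossing hij hdes hlt hD) horthS hS1D with h' | ⟨-, h'⟩
    · exact h'.false
    · exact hD.not_ge h'
  · rcases hW with h' | h'
    · exact h'.ne' heq
    · exact h'.not_ge hle

/-- Let `S1` be the leftmost source and `D1` the leftmost destination (so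
`S1 → D1` is the first greedy message), and suppose that after `S1 → D1` the
left-to-right greedy orthogonal scheme would next choose `Si → Dj`, i.e.
`Si → Dj` is the (source-then-destination) lexicographically first message
orthogonal to `S1 → D1`.  Then the set of all messages that either originate
from a source strictly to the left of `Si` or are intended for a destination
strictly to the left of `Dj` induces an acyclic demand graph. -/
theorem stmt7 {Src Dst : Type*} (posS : Src → ℝ) (posD : Dst → ℝ)
    (desired heard : Src → Dst → Prop)
    (h : IsConvexCellular posS posD desired heard)
    (S1 : Src) (D1 : Dst)
    (hS1 : ∀ s, posS S1 ≤ posS s) (hD1 : ∀ d, posD D1 ≤ posD d)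
    (h11 : desired S1 D1)
    (Si : Src) (Dj : Dst)
    (hij : desired Si Dj) (horthS : ¬ heard Si D1) (horthD : ¬ heard S1 Dj)
    (hmin : ∀ S D, desired S D → ¬ heard S D1 → ¬ heard S1 D →
      posS Si < posS S ∨ (posS Si = posS S ∧ posD Dj ≤ posD D)) :
    ¬ HasAltCycleIn
      (fun S D => desired S D ∧ (posS S < posS Si ∨ posD D < posD Dj)) heard :=
  stmt7_general posS posD desired heard h S1 D1 hS1 hD1 Si Dj hij horthS hmin
end

section
/- In a one-dimensional convex cellular network, the set of messages chosen by the left-to-right greedy orthogonal scheme is pairwise orthogonal: for any two chosen messages S_a → D_a and S_b → D_b with S_a < S_b, destination D_a cannot hear S_b and destination D_b cannot hear S_a. -/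
/-!
Let `a < b` be chosen and `a' = a + 1`. Since `δ a` hears `σ a` but not `σ a'`, which lies to
the right of `σ a`, hearing convexity at `δ a` forces `δ a < σ a'`; then the unheard interval
to the right of `δ a` that starts at `σ a'` contains `σ b`. Symmetrically, `σ a < δ a'`, and the
destinations from `δ a'` on, among them `δ b`, cannot hear `σ a`.
-/

namespace IsConvexCellular

variable {Src Dst : Type*} {posS : Src → ℝ} {posD : Dst → ℝ} {desired heard : Src → Dst → Prop}
  (h : IsConvexCellular posS posD desired heard)
include h

theorem posD_lt_posS_of_not_heard {s s' : Src} {d : Dst} (hs : heard s d)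
    (hss' : posS s < posS s') (hs' : ¬ heard s' d) : posD d < posS s' := by
  refine lt_of_le_of_ne (not_lt.mp fun hlt => ?_) (h.pos_ne s' d).symm
  exact h.destHearL s s' d hss' hlt hs' hs

theorem not_heard_of_posS_le {s s' s'' : Src} {d : Dst} (hs : heard s d)
    (hss' : posS s < posS s') (hs' : ¬ heard s' d) (hs's'' : posS s' ≤ posS s'') :
    ¬ heard s'' d := by
  rcases hs's''.eq_or_lt with heq | hlt
  · rwa [← h.posS_inj heq]
  · exact h.destHearR s'' s' d hlt (h.posD_lt_posS_of_not_heard hs hss' hs') hs'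

theorem posS_lt_posD_of_not_heard {s : Src} {d d' : Dst} (hs : heard s d)
    (hdd' : posD d < posD d') (hd' : ¬ heard s d') : posS s < posD d' := by
  refine lt_of_le_of_ne (not_lt.mp fun hlt => ?_) (h.pos_ne s d')
  exact h.srcHearL d d' s hdd' hlt hd' hs

theorem not_heard_of_posD_le {s : Src} {d d' d'' : Dst} (hs : heard s d)
    (hdd' : posD d < posD d') (hd' : ¬ heard s d') (hd'd'' : posD d' ≤ posD d'') :
    ¬ heard s d'' := by
  rcases hd'd''.eq_or_lt with heq | hlt
  · rwa [← h.posD_inj heq]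
  · exact h.srcHearR d'' d' s hlt (h.posS_lt_posD_of_not_heard hs hdd' hd') hd'

end IsConvexCellular

/-- The messages `σ 0 → δ 0, …, σ (n-1) → δ (n-1)` chosen by the left-to-right
greedy orthogonal scheme (positions strictly increasing along the selection,
each message desired, and consecutive messages orthogonal) are pairwise
orthogonal: for any two chosen messages with `σ a` to the left of `σ b`,
destination `δ a` cannot hear `σ b` and destination `δ b` cannot hear `σ a`. -/
theorem stmt10 {Src Dst : Type*} (posS : Src → ℝ) (posD : Dst → ℝ)
    (desired heard : Src → Dst → Prop)
    (h : IsConvexCellular posS posD desired heard)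
    (n : ℕ) (σ : Fin n → Src) (δ : Fin n → Dst)
    (hmonoS : StrictMono fun k => posS (σ k))
    (hmonoD : StrictMono fun k => posD (δ k))
    (hdes : ∀ k, desired (σ k) (δ k))
    (horth : ∀ (k : Fin n) (hk : (k : ℕ) + 1 < n),
      ¬ heard (σ ⟨(k : ℕ) + 1, hk⟩) (δ k) ∧ ¬ heard (σ k) (δ ⟨(k : ℕ) + 1, hk⟩))
    (a b : Fin n) (hab : posS (σ a) < posS (σ b)) :
    ¬ heard (σ b) (δ a) ∧ ¬ heard (σ a) (δ b) := by
  have hab' : a < b := hmonoS.lt_iff_lt.mp hab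
  have hsucc : (a : ℕ) + 1 < n := lt_of_le_of_lt hab' b.isLt
  set a' : Fin n := ⟨(a : ℕ) + 1, hsucc⟩
  have haa' : a < a' := Fin.lt_def.mpr (Nat.lt_succ_self a)
  have ha'b : a' ≤ b := Fin.le_def.mpr hab'
  obtain ⟨hS, hD⟩ := horth a hsucc
  have hheard : heard (σ a) (δ a) := h.desired_heard _ _ (hdes a)
  exact ⟨h.not_heard_of_posS_le hheard (hmonoS haa') hS (hmonoS.monotone ha'b),
    h.not_heard_of_posD_le hheard (hmonoD haa') hD (hmonoD.monotone ha'b)⟩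
end

section
/- The maximum size of an orthogonal set of messages in a one-dimensional convex cellular network equals the number of messages selected by the left-to-right greedy orthogonal scheme; in particular, no orthogonal set (greedy or otherwise) is larger than the greedy one. -/
/-- A set of desired (source, destination) message pairs is orthogonal if the
sources are pairwise distinct, the destinations are pairwise distinct, and no
involved destination hears any involved source other than its own. -/
def IsOrthogonalSet {Src Dst : Type*} (desired heard : Src → Dst → Prop)
    (M : Set (Src × Dst)) : Prop :=
  (∀ m ∈ M, desired m.1 m.2) ∧
  ∀ m ∈ M, ∀ m' ∈ M, m ≠ m' → m.1 ≠ m'.1 ∧ m.2 ≠ m'.2 ∧ ¬ heard m'.1 m.2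

def Interferes {Src Dst : Type*} (heard : Src → Dst → Prop) (m m' : Src × Dst) : Prop :=
  heard m.1 m'.2 ∨ heard m'.1 m.2

theorem IsOrthogonalSet.not_interferes {Src Dst : Type*} {desired heard : Src → Dst → Prop}
    {M : Set (Src × Dst)} (hM : IsOrthogonalSet desired heard M) {m m' : Src × Dst}
    (hm : m ∈ M) (hm' : m' ∈ M) (hne : m ≠ m') : ¬ Interferes heard m m' :=
  not_or.2 ⟨(hM.2 m' hm' m hm hne.symm).2.2, (hM.2 m hm m' hm' hne).2.2⟩

theorem Fin.exists_and_forall_succ_not {n : ℕ} {P : Fin n → Prop} (hP : ∃ k, P k) :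
    ∃ k, P k ∧ ∀ hk : (k : ℕ) + 1 < n, ¬ P ⟨k + 1, hk⟩ := by
  classical
  obtain ⟨k₀, hk₀⟩ := hP
  obtain ⟨k, hk, hmax⟩ :=
    (Finset.univ.filter P).exists_max_image Fin.val ⟨k₀, by simpa using hk₀⟩
  refine ⟨k, (Finset.mem_filter.1 hk).2, fun hk1 hPk1 => ?_⟩
  have : (k : ℕ) + 1 ≤ k := hmax ⟨k + 1, hk1⟩ (by simpa using hPk1)
  omega

namespace IsConvexCellular

variable {Src Dst : Type*} {posS : Src → ℝ} {posD : Dst → ℝ}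
  {desired heard : Src → Dst → Prop} {s s' : Src} {d d' : Dst}

theorem posS_lt_posD_of_not_heard_s11 (h : IsConvexCellular posS posD desired heard)
    (hsd : heard s d) (hd : posD d ≤ posD d') (hsd' : ¬ heard s d') : posS s < posD d' := by
  rcases hd.eq_or_lt with heq | hlt
  · exact absurd (h.posD_inj heq ▸ hsd) hsd'
  · rcases (h.pos_ne s d').lt_or_gt with hsd'_lt | hd's_lt
    · exact hsd'_lt
    · exact absurd hsd (h.srcHearL d d' s hlt hd's_lt hsd')

theorem posD_lt_posS_of_not_heard_s11 (h : IsConvexCellular posS posD desired heard)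
    (hsd : heard s d) (hs : posS s ≤ posS s') (hs'd : ¬ heard s' d) : posD d < posS s' := by
  rcases hs.eq_or_lt with heq | hlt
  · exact absurd (h.posS_inj heq ▸ hsd) hs'd
  · rcases (h.pos_ne s' d).lt_or_gt with hs'd_lt | hds'_lt
    · exact absurd hsd (h.destHearL s s' d hlt hs'd_lt hs'd)
    · exact hds'_lt

theorem heard_of_heard_of_heard (h : IsConvexCellular posS posD desired heard)
    (hs'd : heard s' d) (hsd' : heard s d') (hs : posS s ≤ posS s') (hd : posD d ≤ posD d') :
    heard s' d' := by
  by_contra hs'd'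
  exact (h.posS_lt_posD_of_not_heard_s11 hs'd hd hs'd').not_gt
    (h.posD_lt_posS_of_not_heard_s11 hsd' hs hs'd')

theorem not_heard_of_posD_le_s11 (h : IsConvexCellular posS posD desired heard)
    (hsd : ¬ heard s d) (hlt : posS s < posD d) (hd : posD d ≤ posD d') : ¬ heard s d' := by
  rcases hd.eq_or_lt with heq | hdd'
  · rwa [← h.posD_inj heq]
  · exact h.srcHearR d' d s hdd' hlt hsd

theorem not_heard_of_posS_le_s11 (h : IsConvexCellular posS posD desired heard)
    (hsd : ¬ heard s d) (hlt : posD d < posS s) (hs : posS s ≤ posS s') : ¬ heard s' d := by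
  rcases hs.eq_or_lt with heq | hss'
  · rwa [← h.posS_inj heq]
  · exact h.destHearR s' s d hss' hlt hsd

theorem desired_of_crossing_s11 (h : IsConvexCellular posS posD desired heard)
    (hsd : desired s d) (hs'd' : desired s' d') (hs : posS s' < posS s) (hd : posD d < posD d') :
    desired s' d := by
  rcases (h.pos_ne s' d).lt_or_gt with hs'd | hds'
  · exact h.srcConvR d' d s' hd hs'd hs'd'
  · exact h.destConvR s s' d hs hds' hsd

theorem interferes_of_posS_lt_posD (h : IsConvexCellular posS posD desired heard)
    {m m' : Src × Dst} (hm : desired m.1 m.2) (hm' : desired m'.1 m'.2)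
    (h₁ : posS m.1 < posD m'.2) (h₂ : posS m'.1 < posD m.2) : Interferes heard m m' := by
  rcases lt_trichotomy (posS m.1) (posS m'.1) with hlt | heq | hgt
  · exact .inr (h.desired_heard _ _ (h.destConvL m.1 m'.1 m.2 hlt h₂ hm))
  · exact .inr (h.posS_inj heq ▸ h.desired_heard _ _ hm)
  · exact .inl (h.desired_heard _ _ (h.destConvL m'.1 m.1 m'.2 hgt h₁ hm'))

theorem interferes_of_posD_lt_posS (h : IsConvexCellular posS posD desired heard)
    {m m' : Src × Dst} (hm : desired m.1 m.2) (hm' : desired m'.1 m'.2)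
    (h₁ : posD m.2 < posS m'.1) (h₂ : posD m'.2 < posS m.1) : Interferes heard m m' := by
  rcases lt_trichotomy (posS m.1) (posS m'.1) with hlt | heq | hgt
  · exact .inl (h.desired_heard _ _ (h.destConvR m'.1 m.1 m'.2 hlt h₂ hm'))
  · exact .inr (h.posS_inj heq ▸ h.desired_heard _ _ hm)
  · exact .inr (h.desired_heard _ _ (h.destConvR m.1 m'.1 m.2 hgt h₁ hm))

theorem interferes_of_interferes_of_le (h : IsConvexCellular posS posD desired heard)
    {g m m' : Src × Dst} (hm : desired m.1 m.2) (hm' : desired m'.1 m'.2)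
    (hs : posS g.1 ≤ posS m.1) (hd : posD g.2 ≤ posD m.2)
    (hs' : posS g.1 ≤ posS m'.1) (hd' : posD g.2 ≤ posD m'.2)
    (hgm : Interferes heard g m) (hgm' : Interferes heard g m') : Interferes heard m m' := by
  rcases hgm with hgm | hmg <;> rcases hgm' with hgm' | hm'g
  · by_contra hno
    obtain ⟨hmm', hm'm⟩ := not_or.1 hno
    exact hno (h.interferes_of_posD_lt_posS hm hm' (h.posD_lt_posS_of_not_heard_s11 hgm hs' hm'm)
      (h.posD_lt_posS_of_not_heard_s11 hgm' hs hmm'))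
  · exact .inr (h.heard_of_heard_of_heard hm'g hgm hs' hd)
  · exact .inl (h.heard_of_heard_of_heard hmg hgm' hs hd')
  · by_contra hno
    obtain ⟨hmm', hm'm⟩ := not_or.1 hno
    exact hno (h.interferes_of_posS_lt_posD hm hm' (h.posS_lt_posD_of_not_heard_s11 hmg hd' hmm')
      (h.posS_lt_posD_of_not_heard_s11 hm'g hd hm'm))

theorem isOrthogonalSet_of_pairwise (h : IsConvexCellular posS posD desired heard)
    {M : Set (Src × Dst)} (hdes : ∀ m ∈ M, desired m.1 m.2)
    (hM : M.Pairwise fun m m' => ¬ Interferes heard m m') : IsOrthogonalSet desired heard M := by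
  refine ⟨hdes, fun m hm m' hm' hne => ?_⟩
  obtain ⟨hmm', hm'm⟩ := not_or.1 (hM hm hm' hne)
  refine ⟨fun e => hm'm ?_, fun e => hmm' ?_, hm'm⟩
  · rw [← e]; exact h.desired_heard _ _ (hdes m hm)
  · rw [← e]; exact h.desired_heard _ _ (hdes m hm)

theorem ncard_le_of_forall_exists_interferes (h : IsConvexCellular posS posD desired heard)
    {ι : Type*} [Finite ι] (g : ι → Src × Dst) {O : Set (Src × Dst)}
    (hO : IsOrthogonalSet desired heard O)
    (hcover : ∀ m ∈ O, ∃ i, posS (g i).1 ≤ posS m.1 ∧ posD (g i).2 ≤ posD m.2 ∧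
      Interferes heard (g i) m) :
    O.ncard ≤ Nat.card ι := by
  choose f hf using fun m : O => hcover m m.2
  have hinj : Function.Injective f := by
    intro m m' hff
    by_contra hne
    obtain ⟨hs, hd, hi⟩ := hf m
    obtain ⟨hs', hd', hi'⟩ := hf m'
    rw [← hff] at hs' hd' hi'
    exact hO.not_interferes m.2 m'.2 (Subtype.coe_ne_coe.2 hne)
      (h.interferes_of_interferes_of_le (hO.1 m m.2) (hO.1 m' m'.2) hs hd hs' hd' hi hi')
  exact Nat.card_coe_set_eq O ▸ Nat.card_le_card_of_injective f hinj

section Greedy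

variable {n : ℕ} {σ : Fin n → Src} {δ : Fin n → Dst}

theorem greedy_not_heard (h : IsConvexCellular posS posD desired heard)
    (hmonoS : StrictMono fun k => posS (σ k)) (hmonoD : StrictMono fun k => posD (δ k))
    (hdes : ∀ k, desired (σ k) (δ k))
    (horth : ∀ (k : Fin n) (hk : (k : ℕ) + 1 < n),
      ¬ heard (σ ⟨(k : ℕ) + 1, hk⟩) (δ k) ∧ ¬ heard (σ k) (δ ⟨(k : ℕ) + 1, hk⟩))
    {j k : Fin n} (hjk : j < k) : ¬ heard (σ j) (δ k) ∧ ¬ heard (σ k) (δ j) := by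
  have hj : (j : ℕ) + 1 < n := by have := Fin.lt_def.1 hjk; omega
  set j' : Fin n := ⟨j + 1, hj⟩
  have hjj' : j < j' := Fin.lt_def.2 (Nat.lt_succ_self _)
  have hj'k : j' ≤ k := Fin.le_def.2 hjk
  obtain ⟨hnot_j'j, hnot_jj'⟩ := horth j hj
  have hjj := h.desired_heard _ _ (hdes j)
  exact ⟨h.not_heard_of_posD_le_s11 hnot_jj'
      (h.posS_lt_posD_of_not_heard_s11 hjj (hmonoD hjj').le hnot_jj') (hmonoD.monotone hj'k),
    h.not_heard_of_posS_le_s11 hnot_j'j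
      (h.posD_lt_posS_of_not_heard_s11 hjj (hmonoS hjj').le hnot_j'j) (hmonoS.monotone hj'k)⟩

theorem greedy_isOrthogonalSet (h : IsConvexCellular posS posD desired heard)
    (hmonoS : StrictMono fun k => posS (σ k)) (hmonoD : StrictMono fun k => posD (δ k))
    (hdes : ∀ k, desired (σ k) (δ k))
    (horth : ∀ (k : Fin n) (hk : (k : ℕ) + 1 < n),
      ¬ heard (σ ⟨(k : ℕ) + 1, hk⟩) (δ k) ∧ ¬ heard (σ k) (δ ⟨(k : ℕ) + 1, hk⟩)) :
    IsOrthogonalSet desired heard (Set.range fun k => (σ k, δ k)) := by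
  refine h.isOrthogonalSet_of_pairwise (by rintro _ ⟨k, rfl⟩; exact hdes k) ?_
  rintro _ ⟨j, rfl⟩ _ ⟨k, rfl⟩ hne
  rcases lt_or_gt_of_ne (fun hjk : j = k => hne (by rw [hjk])) with hjk | hkj
  · exact not_or.2 (h.greedy_not_heard hmonoS hmonoD hdes horth hjk)
  · exact not_or.2 (h.greedy_not_heard hmonoS hmonoD hdes horth hkj).symm

theorem greedy_interferes (h : IsConvexCellular posS posD desired heard) (hn : 0 < n)
    (hmonoS : StrictMono fun k => posS (σ k)) (hdes : ∀ k, desired (σ k) (δ k))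
    (horth : ∀ (k : Fin n) (hk : (k : ℕ) + 1 < n),
      ¬ heard (σ ⟨(k : ℕ) + 1, hk⟩) (δ k) ∧ ¬ heard (σ k) (δ ⟨(k : ℕ) + 1, hk⟩))
    (hmin : ∀ (k : Fin n) (hk : (k : ℕ) + 1 < n) (S : Src) (D : Dst),
      desired S D → posS (σ k) ≤ posS S → posD (δ k) ≤ posD D →
      ¬ heard S (δ k) → ¬ heard (σ k) D →
      posS (σ ⟨(k : ℕ) + 1, hk⟩) < posS S ∨
        (posS (σ ⟨(k : ℕ) + 1, hk⟩) = posS S ∧ posD (δ ⟨(k : ℕ) + 1, hk⟩) ≤ posD D))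
    (hterm : ∀ (S : Src) (D : Dst),
      desired S D → posS (σ ⟨n - 1, Nat.sub_one_lt_of_lt hn⟩) ≤ posS S →
      posD (δ ⟨n - 1, Nat.sub_one_lt_of_lt hn⟩) ≤ posD D →
      ¬ heard S (δ ⟨n - 1, Nat.sub_one_lt_of_lt hn⟩) →
      ¬ heard (σ ⟨n - 1, Nat.sub_one_lt_of_lt hn⟩) D → False)
    {m : Src × Dst} (hm : desired m.1 m.2) {k : Fin n}
    (hs : posS (σ k) ≤ posS m.1) (hd : posD (δ k) ≤ posD m.2)
    (hlast : ∀ hk : (k : ℕ) + 1 < n,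
      ¬ (posS (σ ⟨k + 1, hk⟩) ≤ posS m.1 ∧ posD (δ ⟨k + 1, hk⟩) ≤ posD m.2)) :
    Interferes heard (σ k, δ k) m := by
  by_contra hno
  obtain ⟨hkm, hmk⟩ := not_or.1 hno
  by_cases hk1 : (k : ℕ) + 1 < n
  swap
  · have hk : k = ⟨n - 1, Nat.sub_one_lt_of_lt hn⟩ := Fin.ext (by simp only; omega)
    rw [hk] at hs hd hmk hkm
    exact hterm m.1 m.2 hm hs hd hmk hkm
  set k' : Fin n := ⟨k + 1, hk1⟩
  rcases hmin k hk1 m.1 m.2 hm hs hd hmk hkm with hlt | ⟨heq, hle⟩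
  · have hdlt : posD m.2 < posD (δ k') := lt_of_not_ge fun hle => hlast hk1 ⟨hlt.le, hle⟩
    -- `σ k' → m.2` would be orthogonal to `gₖ` and lexicographically below `g_k'`.
    have hk'm := h.desired_of_crossing_s11 hm (hdes k') hlt hdlt
    rcases hmin k hk1 (σ k') m.2 hk'm (hmonoS (Fin.lt_def.2 (Nat.lt_succ_self _))).le hd
      (horth k hk1).1 hkm with hlt' | ⟨_, hle'⟩
    · exact hlt'.false
    · exact hle'.not_gt hdlt
  · exact hlast hk1 ⟨heq.le, hle⟩

end Greedy

end IsConvexCellular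

/-- Suppose the left-to-right greedy orthogonal scheme selects the `n` messages
`σ 0 → δ 0, …, σ (n-1) → δ (n-1)` (starting from the leftmost source and
destination, each selection lexicographically minimal among messages orthogonal
to its predecessor, and no orthogonal message remaining at the end).  Then the
maximum cardinality of an orthogonal set of messages equals `n`, the number of
messages selected by the greedy scheme; in particular no orthogonal set,
greedy or otherwise, is larger than the greedy one. -/
theorem stmt11 {Src Dst : Type*} (posS : Src → ℝ) (posD : Dst → ℝ)
    (desired heard : Src → Dst → Prop)
    (h : IsConvexCellular posS posD desired heard)
    (n : ℕ) (hn : 0 < n) (σ : Fin n → Src) (δ : Fin n → Dst)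
    (hmonoS : StrictMono fun k => posS (σ k))
    (hmonoD : StrictMono fun k => posD (δ k))
    (hdes : ∀ k, desired (σ k) (δ k))
    (hleftS : ∀ s, posS (σ ⟨0, hn⟩) ≤ posS s)
    (hleftD : ∀ d, posD (δ ⟨0, hn⟩) ≤ posD d)
    (horth : ∀ (k : Fin n) (hk : (k : ℕ) + 1 < n),
      ¬ heard (σ ⟨(k : ℕ) + 1, hk⟩) (δ k) ∧ ¬ heard (σ k) (δ ⟨(k : ℕ) + 1, hk⟩))
    (hmin : ∀ (k : Fin n) (hk : (k : ℕ) + 1 < n) (S : Src) (D : Dst),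
      desired S D → posS (σ k) ≤ posS S → posD (δ k) ≤ posD D →
      ¬ heard S (δ k) → ¬ heard (σ k) D →
      posS (σ ⟨(k : ℕ) + 1, hk⟩) < posS S ∨
        (posS (σ ⟨(k : ℕ) + 1, hk⟩) = posS S ∧ posD (δ ⟨(k : ℕ) + 1, hk⟩) ≤ posD D))
    (hterm : ∀ (S : Src) (D : Dst),
      desired S D → posS (σ ⟨n - 1, by omega⟩) ≤ posS S →
      posD (δ ⟨n - 1, by omega⟩) ≤ posD D →
      ¬ heard S (δ ⟨n - 1, by omega⟩) → ¬ heard (σ ⟨n - 1, by omega⟩) D → False) :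
    IsGreatest {m : ℕ | ∃ O : Set (Src × Dst),
      IsOrthogonalSet desired heard O ∧ O.ncard = m} n := by
  have hinj : Function.Injective fun k => (σ k, δ k) :=
    fun j k hjk => hmonoS.injective (congrArg (posS ∘ Prod.fst) hjk)
  refine ⟨⟨_, h.greedy_isOrthogonalSet hmonoS hmonoD hdes horth, ?_⟩, ?_⟩
  · rw [Set.ncard_range_of_injective hinj, Nat.card_fin]
  · rintro _ ⟨O, hO, rfl⟩
    refine (h.ncard_le_of_forall_exists_interferes (fun k => (σ k, δ k)) hO
      fun m hm => ?_).trans (Nat.card_fin n).le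
    obtain ⟨k, ⟨hs, hd⟩, hlast⟩ := Fin.exists_and_forall_succ_not
      (P := fun k => posS (σ k) ≤ posS m.1 ∧ posD (δ k) ≤ posD m.2)
      ⟨⟨0, hn⟩, hleftS m.1, hleftD m.2⟩
    exact ⟨k, hs, hd, h.greedy_interferes hn hmonoS hdes horth hmin hterm
      (hO.1 m hm) hs hd hlast⟩
end
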